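/- A Motzkin tree X is uniquely closable (exactly one closed de Bruijn lambda term has X as its skeleton) if and only if either X = l(Y) where Y is a Motzkin tree containing no unary node l, or X = a(Y,Z) where both Y and Z are uniquely closable. (This inductive characterization is the context-free grammar generating exactly the uniquely closable skeletons.) -/

import Mathlib

/-- Motzkin trees (binary-unary trees): leaf `v`, unary `l`, binary `a`. -/
inductive Mot : Type
  | v : Mot
  | l : Mot → Mot
  | a : Mot → Mot → Mot
deriving DecidableEq

/-- Lambda terms in de Bruijn form. -/
inductive Lam : Type
  | v : Nat → Lam
  | l : Lam → Lam
  | a : Lam → Lam → Lam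
deriving DecidableEq

/-- `t` is closed at depth `d`. -/
def Lam.closedAt : Lam → Nat → Prop
  | .v i, d => i < d
  | .l t, d => t.closedAt (d + 1)
  | .a s t, d => s.closedAt d ∧ t.closedAt d

/-- The Motzkin-tree skeleton of a de Bruijn term. -/
def Lam.skel : Lam → Mot
  | .v _ => .v
  | .l t => .l t.skel
  | .a s t => .a s.skel t.skel

/-- A Motzkin tree is uniquely closable if exactly one closed term has it as skeleton. -/
def Mot.UniquelyClosable (X : Mot) : Prop := ∃! t : Lam, t.closedAt 0 ∧ t.skel = X

/-- A Motzkin tree contains no unary node `l`. -/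
def Mot.LFree : Mot → Prop
  | .v => True
  | .l _ => False
  | .a s t => s.LFree ∧ t.LFree

/-! The uniquely closable skeletons are read off from the finer notion of being uniquely closable
at a depth `d`, i.e. with `d` enclosing binders available. A leaf is uniquely closable at depth `d`
exactly when `d = 1`, an abstraction at depth `d` exactly when its body is at depth `d + 1`, and an
application exactly when both of its parts are. As the depth never decreases towards the
leaves, nothing is uniquely closable at depth `≥ 2`; hence at depth `1` the uniquely closable
trees are the `l`-free ones, and the grammar is the case `d = 0`. -/

theorem Function.Injective.existsUnique_iff_comp {α β : Type*} {f : α → β}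
    (hf : Function.Injective f) {p : β → Prop} (hp : ∀ b, p b → b ∈ Set.range f) :
    (∃! b, p b) ↔ ∃! a, p (f a) := by
  constructor
  · rintro ⟨b, hb, hu⟩
    obtain ⟨a, rfl⟩ := hp b hb
    exact ⟨a, hb, fun a' ha' => hf (hu _ ha')⟩
  · rintro ⟨a, ha, hu⟩
    refine ⟨f a, ha, fun b hb => ?_⟩
    obtain ⟨a', rfl⟩ := hp b hb
    rw [hu a' hb]

theorem existsUnique_prod_and {α β : Type*} {p : α → Prop} {q : β → Prop} :
    (∃! x : α × β, p x.1 ∧ q x.2) ↔ (∃! a, p a) ∧ ∃! b, q b := by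
  constructor
  · rintro ⟨⟨a, b⟩, ⟨ha, hb⟩, hu⟩
    exact ⟨⟨a, ha, fun a' ha' => congrArg Prod.fst (hu (a', b) ⟨ha', hb⟩)⟩,
      ⟨b, hb, fun b' hb' => congrArg Prod.snd (hu (a, b') ⟨ha, hb'⟩)⟩⟩
  · rintro ⟨⟨a, ha, hua⟩, ⟨b, hb, hub⟩⟩
    exact ⟨(a, b), ⟨ha, hb⟩, fun x hx => Prod.ext (hua x.1 hx.1) (hub x.2 hx.2)⟩

theorem Nat.existsUnique_lt_iff {d : ℕ} : (∃! i, i < d) ↔ d = 1 := by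
  constructor
  · rintro ⟨i, hi, hu⟩
    obtain rfl := hu 0 (by omega)
    by_contra hd
    exact one_ne_zero (hu 1 (by omega))
  · rintro rfl
    exact ⟨0, Nat.one_pos, fun i hi => by omega⟩

namespace Lam

theorem mem_range_v_of_skel_eq {t : Lam} (h : t.skel = .v) : t ∈ Set.range Lam.v := by
  cases t <;> simp_all [skel]

theorem mem_range_l_of_skel_eq {t : Lam} {Y : Mot} (h : t.skel = .l Y) : t ∈ Set.range Lam.l := by
  cases t <;> simp_all [skel]

theorem mem_range_a_of_skel_eq {t : Lam} {Y Z : Mot} (h : t.skel = .a Y Z) :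
    t ∈ Set.range fun x : Lam × Lam => Lam.a x.1 x.2 := by
  cases t <;> simp_all [skel]

theorem v_injective : Function.Injective Lam.v := fun _ _ => Lam.v.inj

theorem l_injective : Function.Injective Lam.l := fun _ _ => Lam.l.inj

theorem a_uncurry_injective : Function.Injective fun x : Lam × Lam => Lam.a x.1 x.2 := by
  rintro ⟨⟩ ⟨⟩ h
  simp_all

end Lam

namespace Mot

def UniquelyClosableAt (X : Mot) (d : ℕ) : Prop := ∃! t : Lam, t.closedAt d ∧ t.skel = X

theorem uniquelyClosableAt_zero {X : Mot} : X.UniquelyClosableAt 0 ↔ X.UniquelyClosable := Iff.rfl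

variable {Y Z : Mot} {d : ℕ}

theorem uniquelyClosableAt_v : Mot.v.UniquelyClosableAt d ↔ d = 1 := by
  rw [UniquelyClosableAt,
    Lam.v_injective.existsUnique_iff_comp fun t ht => Lam.mem_range_v_of_skel_eq ht.2]
  simpa [Lam.closedAt, Lam.skel] using Nat.existsUnique_lt_iff

theorem uniquelyClosableAt_l : (Mot.l Y).UniquelyClosableAt d ↔ Y.UniquelyClosableAt (d + 1) := by
  simp only [UniquelyClosableAt]
  rw [Lam.l_injective.existsUnique_iff_comp fun t ht => Lam.mem_range_l_of_skel_eq ht.2]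
  simp only [Lam.closedAt, Lam.skel, l.injEq]

theorem uniquelyClosableAt_a :
    (Mot.a Y Z).UniquelyClosableAt d ↔ Y.UniquelyClosableAt d ∧ Z.UniquelyClosableAt d := by
  simp only [UniquelyClosableAt]
  rw [Lam.a_uncurry_injective.existsUnique_iff_comp fun t ht => Lam.mem_range_a_of_skel_eq ht.2]
  simp only [Lam.closedAt, Lam.skel, a.injEq]
  rw [← existsUnique_prod_and]
  exact existsUnique_congr fun _ => and_and_and_comm

theorem not_uniquelyClosableAt_of_two_le (X : Mot) (hd : 2 ≤ d) : ¬ X.UniquelyClosableAt d := by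
  induction X generalizing d with
  | v => rw [uniquelyClosableAt_v]; omega
  | l Y ih => rw [uniquelyClosableAt_l]; exact ih (by omega)
  | a Y Z ih _ => rw [uniquelyClosableAt_a]; exact fun h => ih hd h.1

theorem uniquelyClosableAt_one_iff_lFree (X : Mot) : X.UniquelyClosableAt 1 ↔ X.LFree := by
  induction X with
  | v => simp [uniquelyClosableAt_v, LFree]
  | l Y _ => simpa [uniquelyClosableAt_l, LFree] using not_uniquelyClosableAt_of_two_le Y le_rfl
  | a Y Z ihY ihZ => rw [uniquelyClosableAt_a, ihY, ihZ, LFree]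

end Mot

/-- Grammar for uniquely closable skeletons: `X` is uniquely closable iff
`X = l(Y)` with `Y` containing no `l`, or `X = a(Y,Z)` with both parts uniquely closable. -/
theorem stmt5 (X : Mot) :
    X.UniquelyClosable ↔
      (∃ Y : Mot, X = .l Y ∧ Y.LFree) ∨
      (∃ Y Z : Mot, X = .a Y Z ∧ Y.UniquelyClosable ∧ Z.UniquelyClosable) := by
  rw [← Mot.uniquelyClosableAt_zero]
  cases X with
  | v => simp [Mot.uniquelyClosableAt_v]
  | l Y => simp [Mot.uniquelyClosableAt_l, Mot.uniquelyClosableAt_one_iff_lFree]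
  | a Y Z => rw [Mot.uniquelyClosableAt_a]; simp [Mot.uniquelyClosableAt_zero]
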